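/- For k > ℓ ≥ 0 and 0 ≤ i ≤ ℓ, the number of lattice paths from (0,0) to (k,ℓ) using steps (1,0) and (0,1) containing exactly i diagonal points (j,j) with j>0 equals (k-ℓ+i)·2^i·C(k+ℓ-i, k)/(k+ℓ-i). -/

import Mathlib

/-- Number of `true`s among the first `t` coordinates of `f` (prefix count of north steps). -/
def prefixTrue {m : ℕ} (f : Fin m → Bool) (t : ℕ) : ℕ :=
  (Finset.univ.filter (fun s : Fin m => s.val < t ∧ f s = true)).card

/-- `nPaths k l i` is the number of lattice paths from `(0,0)` to `(k,l)` with unit steps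
`(1,0)` and `(0,1)` that pass through exactly `i` diagonal points `(j,j)` with `j > 0`. -/
def nPaths (k l i : ℕ) : ℕ :=
  (Finset.univ.filter (fun f : Fin (k + l) → Bool =>
    prefixTrue f (k + l) = k ∧
    ((Finset.range (k + l + 1)).filter
      (fun t => 0 < t ∧ 2 * prefixTrue f t = t)).card = i)).card

/-! Condition on the last step. Off the diagonal this gives Pascal's recurrence
`n(a+1,c+1;i) = n(a,c+1;i) + n(a+1,c;i)`. A path to `(c+1,c+1)` touches the diagonal at its
endpoint, and exchanging the two step types shows `n(c+1,c+1;i+1) = 2 n(c+1,c;i)`. Together with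
`n(k,0;i) = [i = 0]` and `n(c+1,c+1;0) = 0` these recurrences determine `n(k,l;i)` for `l ≤ k`,
and the closed form satisfies the same ones: its Pascal step reduces to
`C(n,a+1)(a+1) = C(n,a)(n-a)`. -/

open Finset

lemma prefixTrue_le {m : ℕ} (f : Fin m → Bool) (t : ℕ) : prefixTrue f t ≤ m :=
  (card_filter_le _ _).trans_eq (card_univ.trans (Fintype.card_fin m))

lemma prefixTrue_zero {m : ℕ} (f : Fin m → Bool) : prefixTrue f 0 = 0 := by
  simp [prefixTrue]

lemma prefixTrue_succ {m : ℕ} (f : Fin m → Bool) {t : ℕ} (ht : t < m) :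
    prefixTrue f (t + 1) = prefixTrue f t + (f ⟨t, ht⟩).toNat := by
  unfold prefixTrue
  cases hf : f ⟨t, ht⟩
  · rw [Bool.toNat_false, add_zero]
    congr 1
    ext s
    simp only [mem_filter, mem_univ, true_and]
    refine ⟨fun ⟨hs, hs'⟩ => ⟨lt_of_le_of_ne (Nat.le_of_lt_succ hs) fun hst => ?_, hs'⟩,
      fun h => ⟨by omega, h.2⟩⟩
    rw [show s = ⟨t, ht⟩ from Fin.ext hst, hf] at hs'
    exact Bool.false_ne_true hs'
  · rw [Bool.toNat_true, ← card_insert_of_notMem (a := (⟨t, ht⟩ : Fin m)) (by simp)]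
    congr 1
    ext s
    simp only [mem_filter, mem_univ, true_and, mem_insert, Fin.ext_iff]
    constructor
    · rintro ⟨hs, hs'⟩
      exact (Nat.lt_succ_iff_lt_or_eq.1 hs).symm.imp id (⟨·, hs'⟩)
    · rintro (hs | ⟨hs, hs'⟩)
      · exact ⟨by omega, by rw [show s = ⟨t, ht⟩ from Fin.ext hs, hf]⟩
      · exact ⟨by omega, hs'⟩

lemma prefixTrue_add_prefixTrue_not {m : ℕ} (f : Fin m → Bool) {t : ℕ} (ht : t ≤ m) :
    prefixTrue f t + prefixTrue (fun s => !f s) t = t := by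
  induction t with
  | zero => simp [prefixTrue_zero]
  | succ t ih =>
    rw [prefixTrue_succ f ht, prefixTrue_succ _ ht]
    have := ih (by omega)
    cases f ⟨t, ht⟩ <;> simp <;> omega

lemma prefixTrue_snoc {m : ℕ} (g : Fin m → Bool) (b : Bool) {t : ℕ} (ht : t ≤ m) :
    prefixTrue (Fin.snoc g b : Fin (m + 1) → Bool) t = prefixTrue g t := by
  induction t with
  | zero => simp [prefixTrue_zero]
  | succ t ih =>
    rw [prefixTrue_succ _ (by omega), prefixTrue_succ g ht, ih (by omega)]
    exact congrArg (_ + Bool.toNat ·) (Fin.snoc_castSucc (i := ⟨t, ht⟩) ..)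

lemma prefixTrue_snoc_last {m : ℕ} (g : Fin m → Bool) (b : Bool) :
    prefixTrue (Fin.snoc g b : Fin (m + 1) → Bool) (m + 1) = prefixTrue g m + b.toNat := by
  rw [prefixTrue_succ _ (Nat.lt_succ_self m), prefixTrue_snoc g b le_rfl]
  exact congrArg (_ + Bool.toNat ·) (Fin.snoc_last (α := fun _ => Bool) ..)

def diagTouches {m : ℕ} (f : Fin m → Bool) : ℕ :=
  #{t ∈ range (m + 1) | 0 < t ∧ 2 * prefixTrue f t = t}

def pathCount (m K i : ℕ) : ℕ :=
  #{f : Fin m → Bool | prefixTrue f m = K ∧ diagTouches f = i}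

lemma nPaths_eq_pathCount (k l i : ℕ) : nPaths k l i = pathCount (k + l) k i := rfl

lemma diagTouches_snoc {m : ℕ} (g : Fin m → Bool) (b : Bool) :
    diagTouches (Fin.snoc g b : Fin (m + 1) → Bool) = diagTouches g +
      if 2 * prefixTrue (Fin.snoc g b : Fin (m + 1) → Bool) (m + 1) = m + 1 then 1 else 0 := by
  unfold diagTouches
  rw [range_add_one, filter_insert]
  have hprefix : ∀ t ∈ range (m + 1),
      (0 < t ∧ 2 * prefixTrue (Fin.snoc g b : Fin (m + 1) → Bool) t = t) ↔
        (0 < t ∧ 2 * prefixTrue g t = t) := fun t ht => by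
    rw [prefixTrue_snoc g b (Nat.lt_succ_iff.1 (mem_range.1 ht))]
  rw [filter_congr hprefix]
  split_ifs with h h' h'
  · exact card_insert_of_notMem (by simp)
  · exact absurd h.2 h'
  · exact absurd ⟨m.succ_pos, h'⟩ h
  · rfl

lemma card_filter_fin_succ {α : Type*} [Fintype α] [DecidableEq α] {m : ℕ}
    (p : (Fin (m + 1) → α) → Prop) [DecidablePred p] :
    #{f | p f} = ∑ b : α, #{g : Fin m → α | p (Fin.snoc g b)} := by
  rw [card_eq_sum_card_fiberwise (f := fun f => f (Fin.last m)) (t := univ) (by simp)]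
  refine sum_congr rfl fun b _ => ?_
  refine card_nbij' Fin.init (fun g => Fin.snoc g b) ?_ ?_ ?_ ?_
  · intro f hf
    obtain ⟨hp, rfl⟩ : p f ∧ f (Fin.last m) = b := by simpa using hf
    simpa [Fin.snoc_init_self] using hp
  · intro g hg
    simp_all
  · intro f hf
    obtain ⟨-, rfl⟩ : p f ∧ f (Fin.last m) = b := by simpa using hf
    exact Fin.snoc_init_self f
  · intro g _
    exact Fin.init_snoc _ _

lemma pathCount_succ (m K i : ℕ) :
    pathCount (m + 1) (K + 1) (i + if 2 * (K + 1) = m + 1 then 1 else 0) =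
      pathCount m K i + pathCount m (K + 1) i := by
  rw [pathCount, card_filter_fin_succ, Fintype.sum_bool]
  simp only [prefixTrue_snoc_last, diagTouches_snoc, Bool.toNat_true, Bool.toNat_false]
  congr 2 <;> refine filter_congr fun g _ => ?_ <;> grind

lemma pathCount_eq_zero_of_lt {m K : ℕ} (h : m < K) (i : ℕ) : pathCount m K i = 0 :=
  card_eq_zero.2 <| filter_eq_empty_iff.2 fun f _ hf => (prefixTrue_le f m).not_gt (hf.1 ▸ h)

lemma pathCount_self (m i : ℕ) : pathCount m m i = if i = 0 then 1 else 0 := by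
  induction m with
  | zero =>
    rcases i with _ | i <;> simp [pathCount, diagTouches, filter_singleton, prefixTrue_zero]
  | succ m ih =>
    have h := pathCount_succ m m i
    rw [if_neg (by omega), add_zero, pathCount_eq_zero_of_lt m.lt_succ_self, add_zero] at h
    exact h.trans ih

lemma diagTouches_not {m : ℕ} (f : Fin m → Bool) :
    diagTouches (fun s => !f s) = diagTouches f := by
  unfold diagTouches
  refine congrArg card (filter_congr fun t ht => ?_)
  have := prefixTrue_add_prefixTrue_not f (Nat.lt_succ_iff.1 (mem_range.1 ht))
  omega

lemma pathCount_eq_of_add_eq {m K K' : ℕ} (h : K + K' = m) (i : ℕ) :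
    pathCount m K i = pathCount m K' i := by
  refine card_nbij' (fun f s => !f s) (fun f s => !f s) ?_ ?_
    (fun f _ => by simp) (fun f _ => by simp)
  all_goals
    intro f hf
    simp only [coe_filter, Set.mem_ofPred_eq, mem_univ, true_and, diagTouches_not] at hf ⊢
    have := prefixTrue_add_prefixTrue_not f le_rfl
    omega

lemma pathCount_zero_eq_zero_of_two_mul_eq {m K : ℕ} (hm : 0 < m) (h : 2 * K = m) :
    pathCount m K 0 = 0 := by
  refine card_eq_zero.2 <| filter_eq_empty_iff.2 fun f _ ⟨hK, ht⟩ => ?_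
  refine card_ne_zero.2 ⟨m, ?_⟩ ht
  simp only [mem_filter, mem_range]
  omega

lemma nPaths_zero_right (k i : ℕ) : nPaths k 0 i = if i = 0 then 1 else 0 :=
  pathCount_self k i

lemma nPaths_self_zero {k : ℕ} (hk : 0 < k) : nPaths k k 0 = 0 :=
  pathCount_zero_eq_zero_of_two_mul_eq (by omega) (two_mul k)

lemma nPaths_succ_succ_of_ne {a c : ℕ} (h : a ≠ c) (i : ℕ) :
    nPaths (a + 1) (c + 1) i = nPaths a (c + 1) i + nPaths (a + 1) c i := by
  have := pathCount_succ (a + c + 1) a i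
  rw [if_neg (by omega), add_zero] at this
  rwa [nPaths_eq_pathCount, nPaths_eq_pathCount, nPaths_eq_pathCount,
    show a + 1 + (c + 1) = a + c + 1 + 1 by omega, show a + (c + 1) = a + c + 1 by omega,
    show a + 1 + c = a + c + 1 by omega]

lemma nPaths_succ_succ_self (c i : ℕ) :
    nPaths (c + 1) (c + 1) (i + 1) = 2 * nPaths (c + 1) c i := by
  have := pathCount_succ (2 * c + 1) c i
  rw [if_pos (by omega), pathCount_eq_of_add_eq (K' := c + 1) (by omega) i, ← two_mul] at this
  rwa [nPaths_eq_pathCount, nPaths_eq_pathCount,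
    show c + 1 + (c + 1) = 2 * c + 1 + 1 by omega, show c + 1 + c = 2 * c + 1 by omega]

def pathFormula (k l i : ℕ) : ℚ :=
  ((k - l + i : ℕ) : ℚ) * 2 ^ i * (Nat.choose (k + l - i) k : ℚ) / ((k + l - i : ℕ) : ℚ)

lemma pathFormula_zero_right {k : ℕ} (hk : 0 < k) (i : ℕ) :
    pathFormula k 0 i = if i = 0 then 1 else 0 := by
  rcases i with _ | i
  · simp [pathFormula, hk.ne']
  · rw [pathFormula, Nat.choose_eq_zero_of_lt (show k + 0 - (i + 1) < k by omega)]
    simp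

lemma pathFormula_self_zero (k : ℕ) : pathFormula k k 0 = 0 := by
  simp [pathFormula]

lemma pathFormula_succ_succ_self (c i : ℕ) :
    pathFormula (c + 1) (c + 1) (i + 1) = 2 * pathFormula (c + 1) c i := by
  rw [pathFormula, pathFormula, show c + 1 - (c + 1) + (i + 1) = c + 1 - c + i by omega,
    show c + 1 + (c + 1) - (i + 1) = c + 1 + c - i by omega, pow_succ]
  ring

lemma pathFormula_succ_succ_of_lt {a c : ℕ} (h : c < a) (i : ℕ) :
    pathFormula (a + 1) (c + 1) i = pathFormula a (c + 1) i + pathFormula (a + 1) c i := by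
  unfold pathFormula
  rcases lt_or_ge (c + 1) i with hi | hi
  · rw [Nat.choose_eq_zero_of_lt (show a + 1 + (c + 1) - i < a + 1 by omega),
      Nat.choose_eq_zero_of_lt (show a + (c + 1) - i < a by omega),
      Nat.choose_eq_zero_of_lt (show a + 1 + c - i < a + 1 by omega)]
    simp
  set n := a + c + 1 - i with hn
  rw [show a + 1 + (c + 1) - i = n + 1 by omega, show a + (c + 1) - i = n by omega,
    show a + 1 + c - i = n by omega, Nat.choose_succ_succ']
  have hratio : (n.choose (a + 1) : ℚ) * (a + 1) = n.choose a * (c + 1 - i : ℕ) := by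
    exact_mod_cast (n.choose_succ_right_eq a).trans (by rw [show n - a = c + 1 - i by omega])
  have hnQ : (n : ℚ) = a + c + 1 - i := by
    rw [hn, Nat.cast_sub (show i ≤ a + c + 1 by omega)]
    push_cast
    ring
  have hn0 : (n : ℚ) ≠ 0 := Nat.cast_ne_zero.2 (by omega)
  push_cast [Nat.cast_sub (show c + 1 ≤ a + 1 by omega), Nat.cast_sub h, Nat.cast_sub h.le,
    Nat.cast_sub (show c ≤ a + 1 by omega), Nat.cast_sub hi] at hratio ⊢
  field_simp
  rw [hnQ]
  linear_combination (-2 : ℚ) * hratio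

theorem nPaths_eq_pathFormula :
    ∀ {k l : ℕ}, 0 < k → l ≤ k → ∀ i, (nPaths k l i : ℚ) = pathFormula k l i
  | k, 0, hk, _, i => by
    rw [nPaths_zero_right, pathFormula_zero_right hk]
    split_ifs <;> simp
  | a + 1, c + 1, _, hca, i => by
    rcases (Nat.succ_le_succ_iff.1 hca).eq_or_lt with rfl | hca
    · rcases i with _ | i
      · rw [nPaths_self_zero c.succ_pos, pathFormula_self_zero, Nat.cast_zero]
      · rw [nPaths_succ_succ_self, pathFormula_succ_succ_self, Nat.cast_mul, Nat.cast_ofNat,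
          nPaths_eq_pathFormula c.succ_pos c.le_succ]
    · rw [nPaths_succ_succ_of_ne hca.ne' i, pathFormula_succ_succ_of_lt hca, Nat.cast_add,
        nPaths_eq_pathFormula (by omega) hca, nPaths_eq_pathFormula a.succ_pos (by omega)]
termination_by k l => k + l

theorem offdiag_path_count_general (k l i : ℕ) (hkl : k > l) :
    (nPaths k l i : ℚ) =
      ((k - l + i : ℕ) : ℚ) * 2 ^ i * (Nat.choose (k + l - i) k : ℚ) / ((k + l - i : ℕ) : ℚ) :=
  nPaths_eq_pathFormula (by omega) hkl.le i

/-- For `k > ℓ ≥ 0` and `0 ≤ i ≤ ℓ`, the number of lattice paths from (0,0) to (k,ℓ)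
containing exactly `i` diagonal points `(j,j)` with `j>0` equals
`(k-ℓ+i)·2^i·C(k+ℓ-i,k)/(k+ℓ-i)`. -/
theorem offdiag_path_count (k l i : ℕ) (hkl : k > l) (hi : i ≤ l) :
    (nPaths k l i : ℚ) =
      ((k - l + i : ℕ) : ℚ) * 2 ^ i * (Nat.choose (k + l - i) k : ℚ) / ((k + l - i : ℕ) : ℚ) :=
  offdiag_path_count_general k l i hkl
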